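/- arXiv:1607.00819 — 2 statements merged into one kernel-verified Lean document; each statement's English description precedes it below -/
import Mathlib

section
/- Let SF = (A, R) be a SETAF (or an AF) and ADF^SF its corresponding ADF. Then: X ⊆ A is a conflict-free extension of SF iff it is conflict-free in ADF^SF iff it is pd-acyclic conflict-free in ADF^SF; X is a stable extension of SF iff it is a model of ADF^SF iff it is stable in ADF^SF; X is the grounded extension of SF iff it is the grounded extension of ADF^SF iff it is the acyclic grounded extension of ADF^SF; and for σ ∈ {admissible, preferred, complete}, X is a σ extension of SF iff it is a cc-σ extension of ADF^SF iff it is a ca₂-σ extension of ADF^SF iff it is an aa-σ extension of ADF^SF. -/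
open Classical

universe u

namespace Dialectical

variable {α : Type u}

/-! ### Two-valued (partial) interpretations -/

/-- A partial two-valued interpretation: `some true` = t, `some false` = f, `none` = undefined. -/
abbrev Interp (α : Type u) := α → Option Bool

/-- The domain of an interpretation. -/
def idom (v : Interp α) : Set α := {a | v a ≠ none}

/-- The set of arguments mapped to t. -/
def tset (v : Interp α) : Set α := {a | v a = some true}

/-- The set of arguments mapped to f. -/
def fset (v : Interp α) : Set α := {a | v a = some false}

/-- `w` is a completion of `v` to the set `Z`. -/
def Completion (v w : Interp α) (Z : Set α) : Prop :=
  idom w = Z ∧ ∀ a ∈ idom v, w a = v a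

/-- The interpretation assigning t on `T` and f on `F' \ T`. -/
noncomputable def mkInterp (T F' : Set α) : Interp α :=
  fun a => if a ∈ T then some true else if a ∈ F' then some false else none

/-! ### Abstract dialectical frameworks -/

/-- An abstract dialectical framework: links and acceptance conditions
(`true` = in, `false` = out). -/
structure ADF (α : Type u) where
  L : α → α → Prop
  C : α → Set α → Bool

namespace ADF

variable (D : ADF α)

/-- The parents of an argument. -/
def par (a : α) : Set α := {p | D.L p a}

/-- Evaluating the acceptance condition of `s` under an interpretation. -/
def evalCond (s : α) (w : Interp α) : Bool := D.C s (tset w ∩ D.par s)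

/-- `s` is decisively in w.r.t. `v`. -/
def DecisivelyIn (v : Interp α) (s : α) : Prop :=
  ∀ w : Interp α, Completion v w (idom v ∪ D.par s) → D.evalCond s w = true

/-- `s` is decisively out w.r.t. `v`. -/
def DecisivelyOut (v : Interp α) (s : α) : Prop :=
  ∀ w : Interp α, Completion v w (idom v ∪ D.par s) → D.evalCond s w = false

/-- `v` is a minimal decisively in interpretation for `s` (`v ∈ min_dec(in,s)`). -/
def MinDecIn (v : Interp α) (s : α) : Prop :=
  D.DecisivelyIn v s ∧
  ∀ w : Interp α, D.DecisivelyIn w s → tset w ⊆ tset v → fset w ⊆ fset v →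
    tset w = tset v ∧ fset w = fset v

/-- `pd` is a positive dependency function on `X`. -/
def PDFun (X : Set α) (pd : α → Option (Interp α)) : Prop :=
  ∀ a ∈ X,
    (∀ v, pd a = some v → D.MinDecIn v a ∧ tset v ⊆ X) ∧
    (pd a = none → ¬ ∃ v, D.MinDecIn v a ∧ tset v ⊆ X)

end ADF

/-- The subset of `X` on which `pd` is non-null. -/
def soundDom (X : Set α) (pd : α → Option (Interp α)) : Set α :=
  {a ∈ X | pd a ≠ none}

namespace ADF
variable (D : ADF α)

/-- `pd` is a maximally sound pd-function of `X`. -/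
def MaxSound (X : Set α) (pd : α → Option (Interp α)) : Prop :=
  D.PDFun X pd ∧
  ¬ ∃ (X'' : Set α) (pd' : α → Option (Interp α)),
      D.PDFun X'' pd' ∧ (∀ a ∈ X'', pd' a ≠ none) ∧
      soundDom X pd ⊂ X'' ∧ X'' ⊆ X ∧
      ∀ a ∈ soundDom X pd, pd' a = pd a

end ADF

/-- The t-part of the interpretation assigned by `pd` to `a`. -/
def pdT (pd : α → Option (Interp α)) (a : α) : Set α :=
  {b | ∃ v, pd a = some v ∧ b ∈ tset v}

/-- The f-part of the interpretation assigned by `pd` to `a`. -/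
def pdF (pd : α → Option (Interp α)) (a : α) : Set α :=
  {b | ∃ v, pd a = some v ∧ b ∈ fset v}

/-- `(Fs, G, B)` is a partially acyclic positive dependency evaluation for `x`
based on the pd-function `pd` of `X`. -/
def IsPAEvalWith (pd : α → Option (Interp α)) (X : Set α)
    (x : α) (Fs : Set α) (G : List α) (B : Set α) : Prop :=
  (∀ a ∈ G, a ∉ Fs) ∧ G.Nodup ∧
  x ∈ X ∧ Fs ⊆ X ∧ (∀ a ∈ G, a ∈ X) ∧
  (∀ a ∈ Fs, pd a ≠ none) ∧ (∀ a ∈ G, pd a ≠ none) ∧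
  (G = [] → x ∈ Fs) ∧ (G ≠ [] → G.getLast? = some x) ∧
  (∀ i : ℕ, ∀ h : i < G.length,
      pdT pd (G.get ⟨i, h⟩) ⊆
        Fs ∪ {b | ∃ j : ℕ, ∃ hj : j < G.length, j < i ∧ G.get ⟨j, hj⟩ = b}) ∧
  (∀ a ∈ Fs, pdT pd a ⊆ Fs) ∧
  (∀ a ∈ Fs, ∃ b ∈ Fs, a ∈ pdT pd b) ∧
  B = (⋃ a ∈ Fs, pdF pd a) ∪ ⋃ a ∈ {c | c ∈ G}, pdF pd a

namespace ADF
variable (D : ADF α)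

/-- `(Fs, G, B)` is a partially acyclic positive dependency evaluation for `x` on `X`. -/
def PAEval (X : Set α) (x : α) (Fs : Set α) (G : List α) (B : Set α) : Prop :=
  ∃ pd, D.MaxSound X pd ∧ IsPAEvalWith pd X x Fs G B

/-- `(G, B)` is an acyclic positive dependency evaluation for `x` on `X`. -/
def AcyclicEval (X : Set α) (x : α) (G : List α) (B : Set α) : Prop :=
  D.PAEval X x ∅ G B

/-- The standard discarded set `X⁺`. -/
def stdDiscarded (X : Set α) : Set α :=
  {a | ∀ Fs G B, D.PAEval Set.univ a Fs G B → (B ∩ X).Nonempty}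

/-- The partially acyclic discarded set `X^{p+}`. -/
def pDiscarded (X : Set α) : Set α :=
  {a | ¬ ∃ Fs G B, D.PAEval Set.univ a Fs G B ∧ Fs ⊆ X ∧ B ∩ X = ∅}

/-- The acyclic discarded set `X^{a+}`. -/
def aDiscarded (X : Set α) : Set α :=
  {a | ∀ G B, D.AcyclicEval Set.univ a G B → (B ∩ X).Nonempty}

/-- The standard range of `X`. -/
noncomputable def stdRange (X : Set α) : Interp α := mkInterp X (D.stdDiscarded X \ X)

/-- The partially acyclic range of `X`. -/
noncomputable def pRange (X : Set α) : Interp α := mkInterp X (D.pDiscarded X \ X)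

/-- The acyclic range of `X`. -/
noncomputable def aRange (X : Set α) : Interp α := mkInterp X (D.aDiscarded X \ X)

/-- Conflict-freeness in an ADF. -/
def ConflictFree (X : Set α) : Prop := ∀ s ∈ X, D.C s (X ∩ D.par s) = true

/-- pd-acyclic conflict-freeness in an ADF. -/
def PDAcyclicCF (X : Set α) : Prop :=
  ∀ a ∈ X, ∃ G B, D.AcyclicEval X a G B ∧ B ∩ X = ∅

def CCAdmissible (X : Set α) : Prop :=
  D.ConflictFree X ∧ ∀ e ∈ X, D.DecisivelyIn (D.stdRange X) e

def CA2Admissible (X : Set α) : Prop :=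
  D.ConflictFree X ∧ ∀ e ∈ X, D.DecisivelyIn (D.pRange X) e

def AAAdmissible (X : Set α) : Prop :=
  D.PDAcyclicCF X ∧ ∀ e ∈ X, D.DecisivelyIn (D.aRange X) e

def CCComplete (X : Set α) : Prop :=
  D.CCAdmissible X ∧ ∀ e, D.DecisivelyIn (D.stdRange X) e → e ∈ X

def CA2Complete (X : Set α) : Prop :=
  D.CA2Admissible X ∧ ∀ e, D.DecisivelyIn (D.pRange X) e → e ∈ X

def AAComplete (X : Set α) : Prop :=
  D.AAAdmissible X ∧ ∀ e, D.DecisivelyIn (D.aRange X) e → e ∈ X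

def CCPreferred (X : Set α) : Prop :=
  D.CCAdmissible X ∧ ∀ Y, D.CCAdmissible Y → X ⊆ Y → X = Y

def CA2Preferred (X : Set α) : Prop :=
  D.CA2Admissible X ∧ ∀ Y, D.CA2Admissible Y → X ⊆ Y → X = Y

def AAPreferred (X : Set α) : Prop :=
  D.AAAdmissible X ∧ ∀ Y, D.AAAdmissible Y → X ⊆ Y → X = Y

/-- `X` is a model of the ADF. -/
def IsModel (X : Set α) : Prop :=
  D.ConflictFree X ∧ ∀ a, a ∉ X → D.C a (X ∩ D.par a) = false

/-- `X` is a stable extension of the ADF. -/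
def IsStable (X : Set α) : Prop :=
  D.PDAcyclicCF X ∧ D.aDiscarded X = Xᶜ

/-- `X` is the grounded extension (the least cc-complete extension). -/
def IsGrounded (X : Set α) : Prop :=
  D.CCComplete X ∧ ∀ Y, D.CCComplete Y → X ⊆ Y

/-- `X` is the acyclic grounded extension (the least aa-complete extension). -/
def IsAcyclicGrounded (X : Set α) : Prop :=
  D.AAComplete X ∧ ∀ Y, D.AAComplete Y → X ⊆ Y

/-- The link `(r,s)` is supporting. -/
def Supporting (r s : α) : Prop :=
  ¬ ∃ R' ⊆ D.par s, D.C s R' = true ∧ D.C s (R' ∪ {r}) = false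

/-- The link `(r,s)` is attacking. -/
def Attacking (r s : α) : Prop :=
  ¬ ∃ R' ⊆ D.par s, D.C s R' = false ∧ D.C s (R' ∪ {r}) = true

/-- Bipolar ADFs. -/
def IsBADF : Prop := ∀ r s, D.L r s → D.Supporting r s ∨ D.Attacking r s

/-- Positive dependency acyclic ADFs (AADF⁺): every partially acyclic evaluation is acyclic. -/
def IsAADFplus : Prop := ∀ X x Fs G B, D.PAEval X x Fs G B → Fs = ∅

end ADF

/-! ### Frameworks with sets of attacking arguments (SETAFs) -/

/-- A framework with sets of attacking arguments. -/
structure SETAF (α : Type u) where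
  R : Set α → α → Prop
  nonempty_of_R : ∀ S a, R S a → S.Nonempty

namespace SETAF

variable (sf : SETAF α)

/-- `X` is conflict-free in the SETAF. -/
def ConflictFree (X : Set α) : Prop := ¬ ∃ S ⊆ X, ∃ a ∈ X, sf.R S a

/-- The discarded set of `X` in the SETAF. -/
def discarded (X : Set α) : Set α := {b | ∃ S ⊆ X, sf.R S b}

/-- `X` defends `a` in the SETAF. -/
def Defends (X : Set α) (a : α) : Prop :=
  ∀ S, sf.R S a → ∃ s ∈ S, s ∈ sf.discarded X

def Admissible (X : Set α) : Prop := sf.ConflictFree X ∧ ∀ a ∈ X, sf.Defends X a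

def Complete (X : Set α) : Prop := sf.Admissible X ∧ ∀ a, sf.Defends X a → a ∈ X

def Preferred (X : Set α) : Prop :=
  sf.Admissible X ∧ ∀ Y, sf.Admissible Y → X ⊆ Y → X = Y

/-- `X` is the grounded extension: the least complete extension. -/
def IsGrounded (X : Set α) : Prop := sf.Complete X ∧ ∀ Y, sf.Complete Y → X ⊆ Y

def Stable (X : Set α) : Prop := sf.ConflictFree X ∧ sf.discarded X = Xᶜ

/-- The ADF corresponding to a SETAF. -/
noncomputable def toADF : ADF α where
  L x y := ∃ B : Set α, x ∈ B ∧ sf.R B y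
  C a B := decide (¬ ∃ S, sf.R S a ∧ S ⊆ B)

end SETAF

/-! ### Extended argumentation frameworks with collective defense attacks (EAFCs) -/

/-- An EAFC: binary attacks `R` and collective defense attacks `D` on attacks. -/
structure EAFC (α : Type u) where
  R : α → α → Prop
  D : Set α → α → α → Prop
  nonempty_of_D : ∀ C a b, D C a b → C.Nonempty
  attack_of_D : ∀ C a b, D C a b → R a b

namespace EAFC

variable (E : EAFC α)

/-- `a` defeats `b` w.r.t. `X`. -/
def Defeats (X : Set α) (a b : α) : Prop :=
  E.R a b ∧ ¬ ∃ C ⊆ X, E.D C a b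

/-- `RS` is a reinstatement set on `X` for the defeat of `b` by `a`. -/
def Reinstatement (X : Set α) (RS : Set (α × α)) (a b : α) : Prop :=
  RS.Finite ∧
  (∀ p ∈ RS, p.1 ∈ X ∧ E.Defeats X p.1 p.2) ∧
  (a, b) ∈ RS ∧
  ∀ p ∈ RS, ∀ C : Set α, E.D C p.1 p.2 → ∃ q ∈ RS, q.2 ∈ C

/-- The discarded set `X⁺` of `X` in the EAFC. -/
def discarded (X : Set α) : Set α :=
  {b | ∃ a ∈ X, E.Defeats X a b ∧ ∃ RS, E.Reinstatement X RS a b}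

/-- `X` defends `a` in the EAFC. -/
def Defends (X : Set α) (a : α) : Prop :=
  ∀ b, E.Defeats X b a → b ∈ E.discarded X

/-- `X` is conflict-free in the EAFC. -/
def ConflictFree (X : Set α) : Prop := ¬ ∃ a ∈ X, ∃ b ∈ X, E.Defeats X a b

def Admissible (X : Set α) : Prop := E.ConflictFree X ∧ ∀ a ∈ X, E.Defends X a

def Complete (X : Set α) : Prop := E.Admissible X ∧ ∀ a, E.Defends X a → a ∈ X

def Preferred (X : Set α) : Prop :=
  E.Admissible X ∧ ∀ Y, E.Admissible Y → X ⊆ Y → X = Y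

def Stable (X : Set α) : Prop :=
  E.ConflictFree X ∧ ∀ b, b ∉ X → ∃ a ∈ X, E.Defeats X a b

/-- The characteristic function of the EAFC. -/
def charFun (X : Set α) : Set α := {a | E.Defends X a}

/-- The grounded extension of the EAFC. -/
def grounded : Set α := ⋃ i : ℕ, E.charFun^[i] ∅

/-- Every argument has finitely many attackers, every attack finitely many defense attackers. -/
def Finitary : Prop :=
  (∀ a, {b | E.R b a}.Finite) ∧ ∀ a b, {C | E.D C a b}.Finite

/-- Strong consistency of an EAFC. -/
def StronglyConsistent : Prop :=
  ¬ ∃ (x y z : α) (X : Set α), E.R x y ∧ x ∈ X ∧ E.D X z y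

/-- The EAFC is bounded hierarchical. -/
def BoundedHierarchical : Prop :=
  ∃ n : ℕ, ∃ hn : 0 < n,
    ∃ (As : Fin n → Set α) (Rs : Fin n → α → α → Prop)
      (Ds : Fin n → Set α → α → α → Prop),
      (∀ C a b, ¬ Ds ⟨n - 1, Nat.sub_lt hn one_pos⟩ C a b) ∧
      (Set.univ = ⋃ i, As i) ∧
      (∀ a b, E.R a b ↔ ∃ i, Rs i a b) ∧
      (∀ C a b, E.D C a b ↔ ∃ i, Ds i C a b) ∧
      (∀ i a b, Rs i a b → a ∈ As i ∧ b ∈ As i) ∧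
      (∀ i C a b, Ds i C a b → Rs i a b ∧
        ∃ h : (i : ℕ) + 1 < n, C ⊆ As ⟨(i : ℕ) + 1, h⟩)

/-- The ADF corresponding to a strongly consistent EAFC. -/
noncomputable def toADF : ADF α where
  L a b := E.R a b ∨ ∃ (c : α) (X : Set α), a ∈ X ∧ E.D X c b
  C a B := decide (¬ ∃ x ∈ B, E.R x a ∧ ¬ ∃ B' ⊆ B, E.D B' x a)

end EAFC

/-! ### Argumentation frameworks with necessities (AFNs) -/

/-- An AFN: binary attacks `R` and necessity relation `N`. -/
structure AFN (α : Type u) where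
  R : α → α → Prop
  N : Set α → α → Prop
  nonempty_of_N : ∀ B a, N B a → B.Nonempty

namespace AFN

variable (fn : AFN α)

/-- `G` is a powerful sequence for `a` on `X`. -/
def PowerfulSeq (X : Set α) (G : List α) (a : α) : Prop :=
  G ≠ [] ∧ (∀ b ∈ G, b ∈ X) ∧ G.getLast? = some a ∧
  ∀ i : ℕ, ∀ h : i < G.length, ∀ B : Set α, fn.N B (G.get ⟨i, h⟩) →
    ∃ j : ℕ, ∃ hj : j < G.length, j < i ∧ G.get ⟨j, hj⟩ ∈ B

/-- `a` is powerful in `X`. -/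
def Powerful (X : Set α) (a : α) : Prop :=
  a ∈ X ∧ ∃ G, fn.PowerfulSeq X G a

/-- `X` is coherent. -/
def Coherent (X : Set α) : Prop := ∀ a ∈ X, fn.Powerful X a

/-- The discarded set `X^att` of `X` in the AFN. -/
def discardedAtt (X : Set α) : Set α :=
  {a | ∀ C, fn.Coherent C → a ∈ C → ∃ c ∈ C, ∃ e ∈ X, fn.R e c}

/-- `X` is conflict-free in the AFN. -/
def ConflictFree (X : Set α) : Prop := ¬ ∃ a ∈ X, ∃ b ∈ X, fn.R a b

/-- `X` is strongly coherent. -/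
def StronglyCoherent (X : Set α) : Prop := fn.ConflictFree X ∧ fn.Coherent X

/-- The deactivated set `X⁺` of `X` in the AFN. -/
def deactivated (X : Set α) : Set α :=
  {a | (∃ e ∈ X, fn.R e a) ∨ ∃ B, fn.N B a ∧ X ∩ B = ∅}

/-- `X` defends `a` in the AFN. -/
def Defends (X : Set α) (a : α) : Prop :=
  fn.Coherent (X ∪ {a}) ∧ ∀ b, fn.R b a → b ∈ fn.discardedAtt X

def Admissible (X : Set α) : Prop := fn.StronglyCoherent X ∧ ∀ a ∈ X, fn.Defends X a

def Complete (X : Set α) : Prop := fn.Admissible X ∧ ∀ a, fn.Defends X a → a ∈ X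

def Preferred (X : Set α) : Prop :=
  fn.Admissible X ∧ ∀ Y, fn.Admissible Y → X ⊆ Y → X = Y

/-- `X` is the grounded extension: the least complete extension. -/
def IsGrounded (X : Set α) : Prop := fn.Complete X ∧ ∀ Y, fn.Complete Y → X ⊆ Y

/-- Stability via completeness and the deactivated set. -/
def Stable (X : Set α) : Prop := fn.Complete X ∧ fn.deactivated X = Xᶜ

/-- Stability via strong coherence and the discarded set. -/
def StableAtt (X : Set α) : Prop :=
  fn.StronglyCoherent X ∧ fn.discardedAtt X = Xᶜ

/-- Strong consistency of an AFN: no argument is both supported and attacked by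
the same argument. -/
def StronglyConsistent : Prop :=
  ∀ a : α, {b | ∃ B, b ∈ B ∧ fn.N B a} ∩ {b | fn.R b a} = ∅

/-- The ADF corresponding to a strongly consistent AFN. -/
noncomputable def toADF : ADF α where
  L x y := fn.R x y ∨ ∃ B, x ∈ B ∧ fn.N B y
  C a P := decide (¬ ((∃ p ∈ P, fn.R p a) ∨ ∃ Z, fn.N Z a ∧ Z ∩ P = ∅))

end AFN

end Dialectical

/-!
In `SETAF.toADF` an argument `e` is decisively in w.r.t. `v` exactly when `fset v` meets every
attacking set of `e`, so the minimal decisively-in interpretations for `e` have empty `t`-part and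
a minimal hitting set of the attackers of `e` as `f`-part. Consequently the `B`-part of every
evaluation for `e` is a hitting set of its attackers, so `B` meets `X` whenever `X` attacks `e`;
conversely, if `X` does not attack `e`, then `Xᶜ` is a hitting set, and a minimal one inside it
(finiteness) gives the acyclic evaluation `([e], B)` with `B ∩ X = ∅`. Hence the standard,
partially acyclic and acyclic discarded sets of `X` all equal the SETAF discarded set, the three
ranges coincide with `X` on `t` and the attacked arguments on `f`, and every ADF semantics
unfolds to its SETAF counterpart.
-/

namespace Dialectical

variable {α : Type u}

theorem tset_mkInterp (T F : Set α) : tset (mkInterp T F) = T := by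
  ext a
  by_cases hT : a ∈ T <;> simp [tset, mkInterp, hT]

theorem fset_mkInterp (T F : Set α) : fset (mkInterp T F) = F \ T := by
  ext a
  by_cases hT : a ∈ T <;> by_cases hF : a ∈ F <;> simp [fset, mkInterp, hT, hF]

noncomputable def pdOfFsets (H : α → Set α) : α → Option (Interp α) :=
  fun a => some (mkInterp ∅ (H a))

theorem pdT_pdOfFsets (H : α → Set α) (a : α) : pdT (pdOfFsets H) a = ∅ := by
  simp [pdT, pdOfFsets, tset_mkInterp]

theorem pdF_pdOfFsets (H : α → Set α) (a : α) : pdF (pdOfFsets H) a = H a := by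
  simp [pdF, pdOfFsets, fset_mkInterp]

namespace ADF

variable {D : ADF α}

theorem DecisivelyIn.C_par_diff_fset_eq_true {v : Interp α} {s : α}
    (h : D.DecisivelyIn v s) : D.C s (D.par s \ fset v) = true := by
  let w : Interp α := fun a => if a ∈ D.par s then some ((v a).getD true) else v a
  have hw : Completion v w (idom v ∪ D.par s) := by
    refine ⟨?_, fun a ha => ?_⟩
    · ext a
      by_cases hp : a ∈ D.par s <;> simp [w, idom, hp]
    · obtain ⟨b, hb⟩ := Option.ne_none_iff_exists'.mp ha
      by_cases hp : a ∈ D.par s <;> simp [w, hp, hb]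
  have htw : tset w ∩ D.par s = D.par s \ fset v := by
    ext a
    by_cases hp : a ∈ D.par s
    · cases hv : v a with
      | none => simp [w, tset, fset, hp, hv]
      | some b => cases b <;> simp [w, tset, fset, hp, hv]
    · simp [hp]
  simpa only [evalCond, htw] using h w hw

end ADF

namespace SETAF

variable (sf : SETAF α)

def IsHittingSet (e : α) (H : Set α) : Prop := ∀ S, sf.R S e → ∃ s ∈ S, s ∈ H

variable {sf}

theorem IsHittingSet.mono {e : α} {H H' : Set α} (h : sf.IsHittingSet e H) (hH : H ⊆ H') :
    sf.IsHittingSet e H' := fun S hS =>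
  let ⟨s, hs, hsH⟩ := h S hS
  ⟨s, hs, hH hsH⟩

theorem isHittingSet_compl_iff {e : α} {X : Set α} :
    sf.IsHittingSet e Xᶜ ↔ e ∉ sf.discarded X := by
  constructor
  · rintro h ⟨S, hSX, hS⟩
    obtain ⟨s, hs, hsX⟩ := h S hS
    exact hsX (hSX hs)
  · intro h S hS
    exact Set.not_subset.mp fun hSX => h ⟨S, hSX, hS⟩

theorem exists_minimal_isHittingSet_subset [Finite α] {e : α} {H : Set α}
    (h : sf.IsHittingSet e H) : ∃ H' ⊆ H, Minimal (sf.IsHittingSet e) H' :=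
  exists_minimal_le_of_wellFoundedLT _ H h

theorem exists_minimal_isHittingSet [Finite α] (e : α) :
    ∃ H, Minimal (sf.IsHittingSet e) H :=
  let ⟨H, _, hH⟩ := exists_minimal_isHittingSet_subset (H := Set.univ)
    fun S hS => let ⟨s, hs⟩ := sf.nonempty_of_R S e hS; ⟨s, hs, trivial⟩
  ⟨H, hH⟩

theorem mem_par_toADF {S : Set α} {e s : α} (hS : sf.R S e) (hs : s ∈ S) :
    s ∈ sf.toADF.par e :=
  ⟨S, hs, hS⟩

theorem toADF_C_eq_true_iff {e : α} {T : Set α} :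
    sf.toADF.C e T = true ↔ ¬ ∃ S, sf.R S e ∧ S ⊆ T := by
  simp only [toADF, decide_eq_true_eq]

theorem toADF_C_inter_par_eq_true_iff {e : α} {X : Set α} :
    sf.toADF.C e (X ∩ sf.toADF.par e) = true ↔ e ∉ sf.discarded X := by
  rw [toADF_C_eq_true_iff, not_iff_not]
  constructor
  · rintro ⟨S, hS, hSX⟩
    exact ⟨S, fun s hs => (hSX hs).1, hS⟩
  · rintro ⟨S, hSX, hS⟩
    exact ⟨S, hS, fun s hs => ⟨hSX hs, mem_par_toADF hS hs⟩⟩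

theorem decisivelyIn_toADF_iff {v : Interp α} {e : α} :
    sf.toADF.DecisivelyIn v e ↔ sf.IsHittingSet e (fset v) := by
  constructor
  · intro h S hS
    have hC := toADF_C_eq_true_iff.mp h.C_par_diff_fset_eq_true
    by_contra hmiss
    exact hC ⟨S, hS, fun s hs => ⟨mem_par_toADF hS hs, fun hsv => hmiss ⟨s, hs, hsv⟩⟩⟩
  · rintro h w ⟨-, hwv⟩
    rw [ADF.evalCond, toADF_C_eq_true_iff]
    rintro ⟨S, hS, hSw⟩
    obtain ⟨s, hs, hsv⟩ := h S hS
    have hws : w s = some false := (hwv s (by simp_all [idom, fset])).trans hsv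
    have hwt : w s = some true := (hSw hs).1
    simp [hws] at hwt

theorem minDecIn_toADF_of_minimal {v : Interp α} {e : α} (ht : tset v = ∅)
    (hf : Minimal (sf.IsHittingSet e) (fset v)) : sf.toADF.MinDecIn v e := by
  refine ⟨decisivelyIn_toADF_iff.mpr hf.prop, fun w hw hwt hwf => ⟨?_, ?_⟩⟩
  · rw [ht]
    exact Set.subset_empty_iff.mp (ht ▸ hwt)
  · exact hwf.antisymm (hf.2 (decisivelyIn_toADF_iff.mp hw) hwf)

variable {H : α → Set α}

theorem maxSound_pdOfFsets (hH : ∀ a, Minimal (sf.IsHittingSet a) (H a)) (X : Set α) :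
    sf.toADF.MaxSound X (pdOfFsets H) := by
  have hdom : soundDom X (pdOfFsets H) = X := by
    ext a
    simp [soundDom, pdOfFsets]
  refine ⟨fun a _ => ⟨fun v hv => ?_, fun hnone => by simp [pdOfFsets] at hnone⟩, ?_⟩
  · cases hv
    refine ⟨minDecIn_toADF_of_minimal (tset_mkInterp _ _) ?_, by simp [tset_mkInterp]⟩
    simpa [fset_mkInterp] using hH a
  · rintro ⟨X'', -, -, -, hlt, hle, -⟩
    exact (hdom ▸ hlt).not_subset hle

theorem acyclicEval_singleton (hH : ∀ a, Minimal (sf.IsHittingSet a) (H a)) {Y : Set α} {x : α}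
    (hx : x ∈ Y) : sf.toADF.AcyclicEval Y x [x] (H x) := by
  refine ⟨pdOfFsets H, maxSound_pdOfFsets hH Y, ?_⟩
  refine ⟨by simp, by simp, hx, Set.empty_subset _, by simpa using hx, by simp,
    by simp [pdOfFsets], by simp, by simp, fun i _ => ?_, by simp, by simp, ?_⟩
  · simp [pdT_pdOfFsets]
  · simp [pdF_pdOfFsets]

theorem exists_acyclicEval_disjoint [Finite α] {X Y : Set α} {x : α} (hx : x ∈ Y)
    (hX : x ∉ sf.discarded X) : ∃ B, sf.toADF.AcyclicEval Y x [x] B ∧ B ∩ X = ∅ := by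
  obtain ⟨Hx, hHxX, hHx⟩ := exists_minimal_isHittingSet_subset (isHittingSet_compl_iff.mpr hX)
  have : ∀ a, ∃ Ha, Minimal (sf.IsHittingSet a) Ha ∧ (a = x → Ha = Hx) := fun a => by
    by_cases hax : a = x
    · exact ⟨Hx, hax ▸ hHx, fun _ => rfl⟩
    · obtain ⟨Ha, hHa⟩ := exists_minimal_isHittingSet a
      exact ⟨Ha, hHa, fun h => absurd h hax⟩
  choose H hH hHx using this
  refine ⟨H x, acyclicEval_singleton hH hx, ?_⟩
  rw [hHx x rfl, ← Set.disjoint_iff_inter_eq_empty]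
  exact Set.subset_compl_iff_disjoint_right.mp hHxX

theorem isHittingSet_of_paEval {X : Set α} {x : α} {Fs : Set α} {G : List α} {B : Set α}
    (h : sf.toADF.PAEval X x Fs G B) : sf.IsHittingSet x B := by
  obtain ⟨pd, ⟨hpd, -⟩, -, -, hxX, -, -, hFs, hG, hnil, hlast, -, -, -, rfl⟩ := h
  have hx : x ∈ Fs ∨ x ∈ G := by
    by_cases hGnil : G = []
    · exact .inl (hnil hGnil)
    · exact .inr (List.mem_of_getLast? (hlast hGnil))
  obtain ⟨v, hv⟩ := Option.ne_none_iff_exists'.mp (hx.elim (hFs x) (hG x))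
  refine (decisivelyIn_toADF_iff.mp ((hpd x hxX).1 v hv).1.1).mono fun b hb => ?_
  rcases hx with hx | hx
  · exact .inl (Set.mem_biUnion hx ⟨v, hv, hb⟩)
  · exact .inr (Set.mem_biUnion (s := {c | c ∈ G}) hx ⟨v, hv, hb⟩)

theorem inter_nonempty_of_paEval {X Y : Set α} {x : α} {Fs : Set α} {G : List α} {B : Set α}
    (h : sf.toADF.PAEval Y x Fs G B) (hx : x ∈ sf.discarded X) : (B ∩ X).Nonempty :=
  let ⟨S, hSX, hS⟩ := hx
  let ⟨s, hs, hsB⟩ := isHittingSet_of_paEval h S hS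
  ⟨s, hsB, hSX hs⟩

section Discarded

variable [Finite α] (X : Set α)

theorem toADF_stdDiscarded : sf.toADF.stdDiscarded X = sf.discarded X := by
  ext a
  refine ⟨fun h => ?_, fun ha _ _ _ hB => inter_nonempty_of_paEval hB ha⟩
  by_contra ha
  obtain ⟨B, hB, hBX⟩ := exists_acyclicEval_disjoint (Set.mem_univ a) ha
  exact (h ∅ [a] B hB).ne_empty hBX

theorem toADF_pDiscarded : sf.toADF.pDiscarded X = sf.discarded X := by
  ext a
  refine ⟨fun h => ?_, fun ha ⟨_, _, _, hB, _, hBX⟩ =>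
    (inter_nonempty_of_paEval hB ha).ne_empty hBX⟩
  by_contra ha
  obtain ⟨B, hB, hBX⟩ := exists_acyclicEval_disjoint (Set.mem_univ a) ha
  exact h ⟨∅, [a], B, hB, Set.empty_subset X, hBX⟩

theorem toADF_aDiscarded : sf.toADF.aDiscarded X = sf.discarded X := by
  ext a
  refine ⟨fun h => ?_, fun ha _ _ hB => inter_nonempty_of_paEval hB ha⟩
  by_contra ha
  obtain ⟨B, hB, hBX⟩ := exists_acyclicEval_disjoint (Set.mem_univ a) ha
  exact (h [a] B hB).ne_empty hBX

theorem toADF_stdRange : sf.toADF.stdRange X = mkInterp X (sf.discarded X \ X) := by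
  rw [ADF.stdRange, toADF_stdDiscarded]

theorem toADF_pRange : sf.toADF.pRange X = mkInterp X (sf.discarded X \ X) := by
  rw [ADF.pRange, toADF_pDiscarded]

theorem toADF_aRange : sf.toADF.aRange X = mkInterp X (sf.discarded X \ X) := by
  rw [ADF.aRange, toADF_aDiscarded]

end Discarded

theorem conflictFree_iff_disjoint_discarded {X : Set α} :
    sf.ConflictFree X ↔ Disjoint X (sf.discarded X) := by
  rw [Set.disjoint_left]
  constructor
  · rintro h a haX ⟨S, hSX, hS⟩
    exact h ⟨S, hSX, a, haX, hS⟩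
  · rintro h ⟨S, hSX, a, haX, hS⟩
    exact h haX ⟨S, hSX, hS⟩

theorem conflictFree_iff_toADF_conflictFree {X : Set α} :
    sf.ConflictFree X ↔ sf.toADF.ConflictFree X := by
  simp only [conflictFree_iff_disjoint_discarded, Set.disjoint_left, ADF.ConflictFree,
    toADF_C_inter_par_eq_true_iff]

theorem conflictFree_iff_toADF_pdAcyclicCF [Finite α] {X : Set α} :
    sf.ConflictFree X ↔ sf.toADF.PDAcyclicCF X := by
  rw [conflictFree_iff_disjoint_discarded, Set.disjoint_left]
  refine ⟨fun h a ha => ?_, fun h a ha hd => ?_⟩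
  · obtain ⟨B, hB, hBX⟩ := exists_acyclicEval_disjoint ha (h ha)
    exact ⟨[a], B, hB, hBX⟩
  · obtain ⟨G, B, hB, hBX⟩ := h a ha
    exact (inter_nonempty_of_paEval hB hd).ne_empty hBX

theorem stable_iff_toADF_isModel {X : Set α} : sf.Stable X ↔ sf.toADF.IsModel X := by
  simp only [Stable, ADF.IsModel, ← conflictFree_iff_toADF_conflictFree, ← Bool.not_eq_true,
    toADF_C_inter_par_eq_true_iff, not_not]
  refine and_congr_right fun hcf => ⟨fun h a ha => h ▸ ha, fun h => ?_⟩
  exact Set.Subset.antisymm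
    (Set.subset_compl_iff_disjoint_left.mpr (conflictFree_iff_disjoint_discarded.mp hcf)) h

theorem stable_iff_toADF_isStable [Finite α] {X : Set α} :
    sf.Stable X ↔ sf.toADF.IsStable X := by
  rw [Stable, ADF.IsStable, toADF_aDiscarded, conflictFree_iff_toADF_pdAcyclicCF]

theorem decisivelyIn_mkInterp_discarded_iff {X : Set α} (hX : sf.ConflictFree X) {e : α} :
    sf.toADF.DecisivelyIn (mkInterp X (sf.discarded X \ X)) e ↔ sf.Defends X e := by
  rw [decisivelyIn_toADF_iff, fset_mkInterp, sdiff_idem,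
    (conflictFree_iff_disjoint_discarded.mp hX).symm.sdiff_eq_left]
  rfl

section TransferAlongRange

variable {X : Set α} {P : Prop} {r : Interp α}

theorem admissible_iff_of_range_eq (hP : sf.ConflictFree X ↔ P)
    (hr : r = mkInterp X (sf.discarded X \ X)) :
    sf.Admissible X ↔ P ∧ ∀ e ∈ X, sf.toADF.DecisivelyIn r e := by
  subst hr
  rw [Admissible, ← hP]
  exact and_congr_right fun hX => forall₂_congr fun e _ =>
    (decisivelyIn_mkInterp_discarded_iff hX).symm

theorem complete_iff_of_range_eq (hP : sf.ConflictFree X ↔ P)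
    (hr : r = mkInterp X (sf.discarded X \ X)) :
    sf.Complete X ↔ (P ∧ ∀ e ∈ X, sf.toADF.DecisivelyIn r e) ∧
      ∀ e, sf.toADF.DecisivelyIn r e → e ∈ X := by
  rw [Complete, admissible_iff_of_range_eq hP hr]
  refine and_congr_right fun hadm => ?_
  subst hr
  simp only [decisivelyIn_mkInterp_discarded_iff (hP.mpr hadm.1)]

end TransferAlongRange

theorem preferred_iff_of_admissible_iff {P : Set α → Prop} (h : ∀ Y, sf.Admissible Y ↔ P Y)
    {X : Set α} : sf.Preferred X ↔ P X ∧ ∀ Y, P Y → X ⊆ Y → X = Y := by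
  simp only [Preferred, h]

theorem isGrounded_iff_of_complete_iff {P : Set α → Prop} (h : ∀ Y, sf.Complete Y ↔ P Y)
    {X : Set α} : sf.IsGrounded X ↔ P X ∧ ∀ Y, P Y → X ⊆ Y := by
  simp only [IsGrounded, h]

end SETAF

end Dialectical

open Dialectical in
/-- full correspondence between the semantics of a SETAF (or AF) and all
three families of semantics of its corresponding ADF. -/
theorem setaf_toADF_semantics
    {α : Type} [Fintype α] (sf : SETAF α) (X : Set α) :
    (sf.ConflictFree X ↔ sf.toADF.ConflictFree X) ∧
    (sf.ConflictFree X ↔ sf.toADF.PDAcyclicCF X) ∧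
    (sf.Stable X ↔ sf.toADF.IsModel X) ∧
    (sf.Stable X ↔ sf.toADF.IsStable X) ∧
    (sf.IsGrounded X ↔ sf.toADF.IsGrounded X) ∧
    (sf.IsGrounded X ↔ sf.toADF.IsAcyclicGrounded X) ∧
    (sf.Admissible X ↔ sf.toADF.CCAdmissible X) ∧
    (sf.Admissible X ↔ sf.toADF.CA2Admissible X) ∧
    (sf.Admissible X ↔ sf.toADF.AAAdmissible X) ∧
    (sf.Preferred X ↔ sf.toADF.CCPreferred X) ∧
    (sf.Preferred X ↔ sf.toADF.CA2Preferred X) ∧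
    (sf.Preferred X ↔ sf.toADF.AAPreferred X) ∧
    (sf.Complete X ↔ sf.toADF.CCComplete X) ∧
    (sf.Complete X ↔ sf.toADF.CA2Complete X) ∧
    (sf.Complete X ↔ sf.toADF.AAComplete X) := by
  open SETAF in
  have cc_adm (Y : Set α) : sf.Admissible Y ↔ sf.toADF.CCAdmissible Y :=
    admissible_iff_of_range_eq conflictFree_iff_toADF_conflictFree (toADF_stdRange Y)
  have ca2_adm (Y : Set α) : sf.Admissible Y ↔ sf.toADF.CA2Admissible Y :=
    admissible_iff_of_range_eq conflictFree_iff_toADF_conflictFree (toADF_pRange Y)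
  have aa_adm (Y : Set α) : sf.Admissible Y ↔ sf.toADF.AAAdmissible Y :=
    admissible_iff_of_range_eq conflictFree_iff_toADF_pdAcyclicCF (toADF_aRange Y)
  have cc_comp (Y : Set α) : sf.Complete Y ↔ sf.toADF.CCComplete Y :=
    complete_iff_of_range_eq conflictFree_iff_toADF_conflictFree (toADF_stdRange Y)
  have ca2_comp (Y : Set α) : sf.Complete Y ↔ sf.toADF.CA2Complete Y :=
    complete_iff_of_range_eq conflictFree_iff_toADF_conflictFree (toADF_pRange Y)
  have aa_comp (Y : Set α) : sf.Complete Y ↔ sf.toADF.AAComplete Y :=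
    complete_iff_of_range_eq conflictFree_iff_toADF_pdAcyclicCF (toADF_aRange Y)
  exact ⟨conflictFree_iff_toADF_conflictFree, conflictFree_iff_toADF_pdAcyclicCF,
    stable_iff_toADF_isModel, stable_iff_toADF_isStable,
    isGrounded_iff_of_complete_iff cc_comp, isGrounded_iff_of_complete_iff aa_comp,
    cc_adm X, ca2_adm X, aa_adm X,
    preferred_iff_of_admissible_iff cc_adm, preferred_iff_of_admissible_iff ca2_adm,
    preferred_iff_of_admissible_iff aa_adm,
    cc_comp X, ca2_comp X, aa_comp X⟩
end

section
/- Let (A, R, D) be a strongly consistent EAFC and ADF^EAFC its corresponding ADF. A set of arguments X ⊆ A is a conflict-free extension of (A, R, D) if and only if it is a conflict-free extension of ADF^EAFC. -/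
open Classical

universe u

namespace Dialectical.EAFC

variable {α : Type*} (E : EAFC α)

theorem mem_toADF_par_of_R {a b : α} (hab : E.R a b) : a ∈ E.toADF.par b :=
  Or.inl hab

theorem subset_toADF_par_of_D {C : Set α} {a b : α} (hD : E.D C a b) :
    C ⊆ E.toADF.par b :=
  fun _ hc => Or.inr ⟨a, C, hc, hD⟩

theorem toADF_C_eq_true_iff (a : α) (B : Set α) :
    E.toADF.C a B = true ↔ ¬ ∃ x ∈ B, E.R x a ∧ ¬ ∃ B' ⊆ B, E.D B' x a :=
  decide_eq_true_iff

/-- Every defence set `C ⊆ X` against an attack on `s` consists of parents of `s`, so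
restricting `X` to the parents of `s` loses no defence. -/
theorem toADF_C_inter_par_eq_true_iff (X : Set α) (s : α) :
    E.toADF.C s (X ∩ E.toADF.par s) = true ↔ ¬ ∃ a ∈ X, E.Defeats X a s := by
  have hdefence : ∀ a, (∃ C ⊆ X ∩ E.toADF.par s, E.D C a s) ↔ ∃ C ⊆ X, E.D C a s :=
    fun a => ⟨fun ⟨C, hC, hD⟩ => ⟨C, hC.trans Set.inter_subset_left, hD⟩,
      fun ⟨C, hC, hD⟩ => ⟨C, Set.subset_inter hC (E.subset_toADF_par_of_D hD), hD⟩⟩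
  rw [toADF_C_eq_true_iff]
  simp only [Defeats, hdefence]
  exact not_congr ⟨fun ⟨a, ⟨haX, _⟩, hR, hnD⟩ => ⟨a, haX, hR, hnD⟩,
    fun ⟨a, haX, hR, hnD⟩ => ⟨a, ⟨haX, E.mem_toADF_par_of_R hR⟩, hR, hnD⟩⟩

end Dialectical.EAFC

open Dialectical in
theorem eafc_toADF_conflictFree_general
    {α : Type} (E : EAFC α) (X : Set α) :
    E.ConflictFree X ↔ E.toADF.ConflictFree X := by
  simp only [ADF.ConflictFree, E.toADF_C_inter_par_eq_true_iff, EAFC.ConflictFree]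
  exact ⟨fun hcf s hs ⟨a, haX, hdef⟩ => hcf ⟨a, haX, s, hs, hdef⟩,
    fun hcf ⟨a, haX, s, hs, hdef⟩ => hcf s hs ⟨a, haX, hdef⟩⟩

open Dialectical in
/-- conflict-free extensions of a strongly consistent EAFC and of its
corresponding ADF coincide. -/
theorem eafc_toADF_conflictFree
    {α : Type} [Fintype α] (E : EAFC α) (h : E.StronglyConsistent) (X : Set α) :
    E.ConflictFree X ↔ E.toADF.ConflictFree X :=
  eafc_toADF_conflictFree_general E X
end
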